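/- There exists a countable transitive set U ∈ ZFSet with rank(U) < ω₁ (so U ∈ V_{ω₁}) such that the membership structure on U (underlying set the members of U, relation the true membership relation) is elementarily equivalent to the membership structure V_{ω₁} on the collection of all sets x ∈ ZFSet with rank(x) < ω₁: for every sentence φ of the first-order language of set theory with a single binary relation symbol, φ holds in the membership structure on U if and only if φ holds in V_{ω₁}. -/

import Mathlib

open FirstOrder Ordinal

/-- The relations of the first-order language of set theory:
a single binary relation symbol for membership. -/
inductive setTheoryRel : ℕ → Type
  | mem : setTheoryRel 2

/-- The first-order language of set theory: no function symbols and one binary relation symbol. -/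
def setTheoryLang : FirstOrder.Language :=
  ⟨fun _ => Empty, setTheoryRel⟩

/-- The membership structure on a subcollection `S` of `ZFSet`: the underlying type is `S` and
the binary relation symbol is interpreted as true set membership. -/
def memStructure (S : Set ZFSet) : setTheoryLang.Structure S where
  funMap := fun f _ => f.elim
  RelMap := fun r x =>
    match r with
    | .mem => (x 0 : ZFSet) ∈ (x 1 : ZFSet)

/-- Satisfaction of a sentence of the language of set theory in the membership structure on a
subcollection `S` of `ZFSet`. -/
def memSat (S : Set ZFSet) (φ : setTheoryLang.Sentence) : Prop :=
  @FirstOrder.Language.Sentence.Realize setTheoryLang S (memStructure S) φ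

/-! Downward Löwenheim–Skolem gives a countable elementary submodel `A` of `V_{ω₁}`. Extensionality
holds in the transitive class `V_{ω₁}`, hence in `A`, so the Mostowski collapse of `A` is an
`∈`-isomorphism onto a countable transitive set `U`; as `A` is countable, `U` can be built in any
universe (the statement lets `U` and `V_{ω₁}` live in different ones). Being countable and
transitive, `U` is hereditarily countable, so `rank U < ω₁`. -/

open Cardinal Language

universe u v

theorem card_setTheoryLang_le_aleph0 : setTheoryLang.card ≤ ℵ₀ := by
  have : ∀ n, Countable (setTheoryRel n) := fun n =>
    ⟨⟨fun _ => 0, fun a b _ => by cases a; cases b; rfl⟩⟩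
  exact Cardinal.mk_le_aleph0 (α := (Σ n, Empty) ⊕ (Σ n, setTheoryRel n))

abbrev memRel : setTheoryLang.Relations 2 := setTheoryRel.mem

def IsExtensional (S : Set ZFSet) : Prop :=
  ∀ a ∈ S, ∀ b ∈ S, (∀ c ∈ S, c ∈ a ↔ c ∈ b) → a = b

def extensionalitySentence : setTheoryLang.Sentence :=
  ∀' ∀' ((∀' (memRel.boundedFormula₂ &2 &0 ⇔ memRel.boundedFormula₂ &2 &1)) ⟹ (&0 =' &1))

theorem memStructure_relMap_memRel (S : Set ZFSet) (x : Fin 2 → S) :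
    (memStructure S).RelMap memRel x ↔ (x 0 : ZFSet) ∈ (x 1 : ZFSet) :=
  Iff.rfl

theorem memSat_extensionalitySentence_iff (S : Set ZFSet) :
    memSat S extensionalitySentence ↔ IsExtensional S := by
  simp [memSat, extensionalitySentence, Sentence.Realize, Formula.Realize, Fin.snoc,
    memStructure_relMap_memRel, IsExtensional]

theorem isExtensional_of_forall_mem {S : Set ZFSet} (hS : ∀ x ∈ S, ∀ y ∈ x, y ∈ S) :
    IsExtensional S := fun a ha b hb h =>
  ZFSet.ext fun z => ⟨fun hz => (h z (hS a ha z hz)).1 hz, fun hz => (h z (hS b hb z hz)).2 hz⟩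

theorem realize_sentence_iff_memSat {M : Type*} [setTheoryLang.Structure M] {B : Set ZFSet}
    (f : M ≃ B)
    (hf : ∀ x : Fin 2 → M, Structure.RelMap memRel x ↔ (f (x 0) : ZFSet) ∈ (f (x 1) : ZFSet))
    (φ : setTheoryLang.Sentence) : M ⊨ φ ↔ memSat B φ := by
  let _ := memStructure B
  let e : M ≃[setTheoryLang] B :=
    { toEquiv := f
      map_fun' := fun f => f.elim
      map_rel' := by
        rintro _ ⟨⟩ x
        exact (hf x).symm }
  exact StrongHomClass.realize_sentence e φ

theorem exists_countable_subset_memSat_iff {S : Set ZFSet.{u}} (hS : S.Infinite) :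
    ∃ A ⊆ S, A.Countable ∧ ∀ φ, memSat A φ ↔ memSat S φ := by
  have := hS.to_subtype
  let _ := memStructure S
  obtain ⟨M, -, hM⟩ := exists_elementarySubstructure_card_eq setTheoryLang (M := S) ∅ ℵ₀ le_rfl
    (by simp) (by simp [card_setTheoryLang_le_aleph0]) (by simp)
  have : Countable M := Cardinal.mk_le_aleph0_iff.1 (Cardinal.lift_inj.1 hM).le
  refine ⟨Subtype.val '' (M : Set S), Subtype.coe_image_subset _ _,
    (Set.countable_coe_iff.1 this).image _, fun φ => ?_⟩
  rw [← realize_sentence_iff_memSat (M := M) (Equiv.Set.image _ _ Subtype.val_injective)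
    (fun _ => Iff.rfl)]
  exact M.realize_sentence φ

section Collapse

variable (A : Set ZFSet.{u}) [Small.{v} A]

noncomputable def collapseMap : ZFSet.{u} → ZFSet.{v} :=
  ZFSet.mem_wf.fix fun x IH => ZFSet.range fun y : {y : A // (y : ZFSet) ∈ x} => IH y.1 y.2

noncomputable def transitiveCollapse : ZFSet.{v} :=
  ZFSet.range fun a : A => collapseMap A a

variable {A}

theorem mem_collapseMap {x : ZFSet.{u}} {z : ZFSet.{v}} :
    z ∈ collapseMap A x ↔ ∃ y ∈ A, y ∈ x ∧ collapseMap A y = z := by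
  rw [collapseMap, WellFounded.fix_eq, ZFSet.mem_range]
  exact ⟨fun ⟨⟨⟨y, hy⟩, hyx⟩, h⟩ => ⟨y, hy, hyx, h⟩, fun ⟨y, hy, hyx, h⟩ => ⟨⟨⟨y, hy⟩, hyx⟩, h⟩⟩

theorem collapseMap_mem_collapseMap {a b : ZFSet.{u}} (ha : a ∈ A) (hab : a ∈ b) :
    collapseMap A a ∈ collapseMap A b :=
  mem_collapseMap.2 ⟨a, ha, hab, rfl⟩

theorem toSet_transitiveCollapse : (transitiveCollapse A).toSet = collapseMap A '' A := by
  ext z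
  change z ∈ transitiveCollapse A ↔ _
  simp [transitiveCollapse]

theorem isTransitive_transitiveCollapse : (transitiveCollapse A).IsTransitive := by
  intro y hy z hz
  obtain ⟨a, rfl⟩ := ZFSet.mem_range.1 hy
  obtain ⟨b, hb, -, rfl⟩ := mem_collapseMap.1 hz
  exact ZFSet.mem_range.2 ⟨⟨b, hb⟩, rfl⟩

theorem collapseMap_injOn (hA : IsExtensional A) : A.InjOn (collapseMap A) := by
  intro a ha
  induction a using ZFSet.inductionOn with
  | _ a IH =>
    intro b hb hab
    refine hA a ha b hb fun c hc => ⟨fun hca => ?_, fun hcb => ?_⟩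
    · obtain ⟨d, hd, hdb, hdc⟩ := mem_collapseMap.1 (hab ▸ collapseMap_mem_collapseMap hc hca)
      rwa [IH c hca hc hd hdc.symm]
    · obtain ⟨d, hd, hda, hdc⟩ := mem_collapseMap.1 (hab ▸ collapseMap_mem_collapseMap hc hcb)
      rwa [← IH d hda hd hc hdc]

theorem collapseMap_mem_collapseMap_iff (hA : IsExtensional A) {a b : ZFSet.{u}} (ha : a ∈ A) :
    collapseMap A a ∈ collapseMap A b ↔ a ∈ b := by
  refine ⟨fun h => ?_, collapseMap_mem_collapseMap ha⟩
  obtain ⟨d, hd, hdb, hda⟩ := mem_collapseMap.1 h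
  rwa [← collapseMap_injOn hA hd ha hda]

theorem memSat_transitiveCollapse_iff (hA : IsExtensional A) (φ : setTheoryLang.Sentence) :
    memSat (transitiveCollapse A).toSet φ ↔ memSat A φ := by
  let _ := memStructure A
  let f : A ≃ (transitiveCollapse A).toSet :=
    (Equiv.Set.imageOfInjOn _ _ (collapseMap_injOn hA)).trans
      (Equiv.setCongr toSet_transitiveCollapse.symm)
  exact (realize_sentence_iff_memSat f
    (fun x => (collapseMap_mem_collapseMap_iff hA (x 0).2).symm) φ).symm

end Collapse

theorem infinite_setOf_rank_lt {o : Ordinal.{u}} (ho : ω ≤ o) :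
    {x : ZFSet.{u} | x.rank < o}.Infinite :=
  Set.infinite_of_injective_forall_mem (f := fun n : ℕ => (n : Ordinal).toZFSet)
    (fun m n h => by simpa using congrArg ZFSet.rank h)
    fun n => by simpa using (Ordinal.natCast_lt_omega0 n).trans_le ho

theorem rank_lt_omega_one_of_countable {x : ZFSet.{u}} (hx : x.toSet.Countable)
    (h : ∀ y ∈ x, y.rank < ω₁) : x.rank < ω₁ := by
  have : Countable x := hx.to_subtype
  calc x.rank ≤ ⨆ y : x, Order.succ (y : ZFSet).rank :=
        ZFSet.rank_le_iff.2 fun y hy =>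
          (Order.lt_succ _).trans_le (Ordinal.le_iSup _ (⟨y, hy⟩ : x))
    _ < ω₁ := Ordinal.iSup_lt_omega_one fun y => (isSuccLimit_omega 1).succ_lt (h y y.2)

theorem rank_lt_omega_one_of_isTransitive {U : ZFSet.{u}} (hU : U.IsTransitive)
    (hc : U.toSet.Countable) : U.rank < ω₁ := by
  have hmem : ∀ x ∈ U, x.rank < ω₁ := by
    intro x
    induction x using ZFSet.inductionOn with
    | _ x IH =>
      intro hx
      exact rank_lt_omega_one_of_countable (hc.mono (hU.subset_of_mem hx))
        fun y hy => IH y hy (hU.subset_of_mem hx hy)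
  exact rank_lt_omega_one_of_countable hc hmem

theorem exists_countable_transitive_memSat_iff {S : Set ZFSet.{u}} (hS : S.Infinite)
    (hS_trans : ∀ x ∈ S, ∀ y ∈ x, y ∈ S) :
    ∃ U : ZFSet.{v}, U.IsTransitive ∧ U.toSet.Countable ∧ ∀ φ, memSat U.toSet φ ↔ memSat S φ := by
  obtain ⟨A, -, hA, hAS⟩ := exists_countable_subset_memSat_iff hS
  have hA_ext : IsExtensional A := by
    rw [← memSat_extensionalitySentence_iff, hAS, memSat_extensionalitySentence_iff]
    exact isExtensional_of_forall_mem hS_trans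
  have : Countable A := hA.to_subtype
  have : Small.{v} A := Countable.toSmall A
  refine ⟨transitiveCollapse A, isTransitive_transitiveCollapse, ?_,
    fun φ => (memSat_transitiveCollapse_iff hA_ext φ).trans (hAS φ)⟩
  rw [toSet_transitiveCollapse]
  exact hA.image _

/-- There is a countable transitive set `U` with `rank U < ω₁` (so `U ∈ V_{ω₁}`) whose membership
structure is elementarily equivalent to the membership structure `V_{ω₁}` on the collection of
all sets of rank `< ω₁`. -/
theorem exists_countable_transitive_elementarilyEquivalent_V_omega1 :
    ∃ U : ZFSet, U.IsTransitive ∧ U.toSet.Countable ∧ U.rank < ω₁ ∧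
      ∀ φ : setTheoryLang.Sentence,
        memSat U.toSet φ ↔ memSat {x : ZFSet | x.rank < ω₁} φ := by
  obtain ⟨U, hU, hc, hUV⟩ := exists_countable_transitive_memSat_iff
    (infinite_setOf_rank_lt omega0_lt_omega_one.le)
    fun x hx y hy => (ZFSet.rank_lt_of_mem hy).trans hx
  exact ⟨U, hU, hc, rank_lt_omega_one_of_isTransitive hU hc, hUV⟩
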